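/- Let k = (k₁,k₂,k₃) ∈ ℤ³ with k_h ≠ 0, so that λ_k ∈ (-1,1). Define R_k = ((1-λ_k²)/(8√2 π²)) ( (1+λ_k)/√(1-λ_k) + (1-λ_k)/√(1+λ_k) ). Then R_k > 0, and there exists a universal constant c > 0 (independent of k) such that R_k ≥ c |k_h| / √(|k_h|² + π² k₃²). (Positivity and lower bound for the real part of the limiting Ekman pumping coefficient, ensuring damping of all modes with k_h ≠ 0.) -/

import Mathlib

open Real

noncomputable def lamk (k1 k2 k3 : ℤ) : ℝ :=
  -(Real.pi * (k3 : ℝ)) / Real.sqrt ((k1 : ℝ) ^ 2 + (k2 : ℝ) ^ 2 + Real.pi ^ 2 * (k3 : ℝ) ^ 2)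

noncomputable def mfun (k1 k2 k3 : ℤ) : ℝ :=
  Real.sqrt ((k1 : ℝ) ^ 2 + (k2 : ℝ) ^ 2 + Real.pi ^ 2 * (k3 : ℝ) ^ 2)

noncomputable def khn (k1 k2 : ℤ) : ℝ := Real.sqrt ((k1 : ℝ) ^ 2 + (k2 : ℝ) ^ 2)

/-- The real part of the limiting Ekman pumping coefficient. -/
noncomputable def Rk (k1 k2 k3 : ℤ) : ℝ :=
  ((1 - lamk k1 k2 k3 ^ 2) / (8 * Real.sqrt 2 * Real.pi ^ 2)) *
    ((1 + lamk k1 k2 k3) / Real.sqrt (1 - lamk k1 k2 k3) +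
      (1 - lamk k1 k2 k3) / Real.sqrt (1 + lamk k1 k2 k3))

/-!
With `a = √(1 - λ)` and `b = √(1 + λ)` one has `a² + b² = 2`, `ab = √(1 - λ²) = |k_h| / m_k`, and
the λ-dependent factor of `R_k` equals `ab (a³ + b³)`. On the circle `a² + b² = 2` the power-mean
inequality gives `a³ + b³ ≥ 2`, hence `R_k ≥ 2 |k_h| / (8√2 π² m_k)`.
-/

lemma two_le_pow_three_add_pow_three {a b : ℝ} (ha : 0 ≤ a) (hb : 0 ≤ b) (h : a ^ 2 + b ^ 2 = 2) :
    2 ≤ a ^ 3 + b ^ 3 := by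
  -- `2t³ - 3t² + 1 = (t - 1)²(2t + 1)`: the cube lies above the tangent at `t = 1`, as a function of `t²`
  nlinarith [mul_nonneg (sq_nonneg (a - 1)) (by linarith : 0 ≤ 2 * a + 1),
    mul_nonneg (sq_nonneg (b - 1)) (by linarith : 0 ≤ 2 * b + 1)]

lemma two_mul_sqrt_one_sub_sq_le {l : ℝ} (hl : l ∈ Set.Ioo (-1 : ℝ) 1) :
    2 * √(1 - l ^ 2) ≤ (1 - l ^ 2) * ((1 + l) / √(1 - l) + (1 - l) / √(1 + l)) := by
  obtain ⟨hl₁, hl₂⟩ := hl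
  set a := √(1 - l) with ha
  set b := √(1 + l) with hb
  have ha₀ : 0 < a := sqrt_pos.mpr (by linarith)
  have hb₀ : 0 < b := sqrt_pos.mpr (by linarith)
  have ha₂ : a ^ 2 = 1 - l := sq_sqrt (by linarith)
  have hb₂ : b ^ 2 = 1 + l := sq_sqrt (by linarith)
  have hab : √(1 - l ^ 2) = a * b := by
    rw [ha, hb, ← sqrt_mul (by linarith)]
    ring_nf
  have hfactor : (1 - l ^ 2) * ((1 + l) / a + (1 - l) / b) = a * b * (a ^ 3 + b ^ 3) := by
    rw [show 1 - l ^ 2 = a ^ 2 * b ^ 2 by rw [ha₂, hb₂]; ring, ← ha₂, ← hb₂]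
    field_simp
    ring
  rw [hab, hfactor, mul_comm 2]
  exact mul_le_mul_of_nonneg_left
    (two_le_pow_three_add_pow_three ha₀.le hb₀.le (by rw [ha₂, hb₂]; ring)) (by positivity)

lemma sq_add_sq_pos {k1 k2 : ℤ} (hk : (k1, k2) ≠ (0, 0)) : 0 < (k1 : ℝ) ^ 2 + (k2 : ℝ) ^ 2 := by
  refine (add_nonneg (sq_nonneg _) (sq_nonneg _)).lt_of_ne' fun h => hk ?_
  obtain ⟨h1, h2⟩ := (add_eq_zero_iff_of_nonneg (sq_nonneg _) (sq_nonneg _)).mp h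
  simp_all

lemma khn_pos {k1 k2 : ℤ} (hk : (k1, k2) ≠ (0, 0)) : 0 < khn k1 k2 :=
  sqrt_pos.mpr (sq_add_sq_pos hk)

lemma mfun_pos {k1 k2 : ℤ} (k3 : ℤ) (hk : (k1, k2) ≠ (0, 0)) : 0 < mfun k1 k2 k3 :=
  sqrt_pos.mpr (add_pos_of_pos_of_nonneg (sq_add_sq_pos hk) (by positivity))

lemma one_sub_lamk_sq {k1 k2 : ℤ} (k3 : ℤ) (hk : (k1, k2) ≠ (0, 0)) :
    1 - lamk k1 k2 k3 ^ 2 = (khn k1 k2 / mfun k1 k2 k3) ^ 2 := by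
  have hm : mfun k1 k2 k3 ≠ 0 := (mfun_pos k3 hk).ne'
  have hm₂ : mfun k1 k2 k3 ^ 2 = (k1 : ℝ) ^ 2 + (k2 : ℝ) ^ 2 + π ^ 2 * (k3 : ℝ) ^ 2 :=
    sq_sqrt (by positivity)
  have hkh₂ : khn k1 k2 ^ 2 = (k1 : ℝ) ^ 2 + (k2 : ℝ) ^ 2 := sq_sqrt (sq_add_sq_pos hk).le
  rw [show lamk k1 k2 k3 = -(π * k3) / mfun k1 k2 k3 from rfl, div_pow, div_pow, hkh₂]
  field_simp
  linarith

lemma lamk_mem_Ioo {k1 k2 : ℤ} (k3 : ℤ) (hk : (k1, k2) ≠ (0, 0)) :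
    lamk k1 k2 k3 ∈ Set.Ioo (-1 : ℝ) 1 := by
  have hsq : lamk k1 k2 k3 ^ 2 < 1 := by
    have := one_sub_lamk_sq k3 hk ▸ pow_pos (div_pos (khn_pos hk) (mfun_pos k3 hk)) 2
    linarith
  exact abs_lt.mp ((sq_lt_one_iff_abs_lt_one _).mp hsq)

lemma sqrt_one_sub_lamk_sq {k1 k2 : ℤ} (k3 : ℤ) (hk : (k1, k2) ≠ (0, 0)) :
    √(1 - lamk k1 k2 k3 ^ 2) = khn k1 k2 / mfun k1 k2 k3 := by
  rw [one_sub_lamk_sq k3 hk, sqrt_sq (div_pos (khn_pos hk) (mfun_pos k3 hk)).le]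

/-- Positivity and a universal lower bound for the real part of the limiting Ekman pumping
coefficient, ensuring damping of all modes with `k_h ≠ 0`. -/
theorem ekman_pumping_positive :
    ∃ c : ℝ, 0 < c ∧
      ∀ k1 k2 k3 : ℤ, (k1, k2) ≠ (0, 0) →
        lamk k1 k2 k3 ∈ Set.Ioo (-1 : ℝ) 1 ∧
        0 < Rk k1 k2 k3 ∧
        c * khn k1 k2 / mfun k1 k2 k3 ≤ Rk k1 k2 k3 := by
  have hC : 0 < 8 * √2 * π ^ 2 := by positivity
  refine ⟨2 / (8 * √2 * π ^ 2), by positivity, fun k1 k2 k3 hk => ?_⟩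
  have hlam := lamk_mem_Ioo k3 hk
  have hbound : 2 / (8 * √2 * π ^ 2) * khn k1 k2 / mfun k1 k2 k3 ≤ Rk k1 k2 k3 :=
    calc 2 / (8 * √2 * π ^ 2) * khn k1 k2 / mfun k1 k2 k3
        = 2 * √(1 - lamk k1 k2 k3 ^ 2) / (8 * √2 * π ^ 2) := by
          rw [sqrt_one_sub_lamk_sq k3 hk]; ring
      _ ≤ _ := by
          rw [Rk, div_mul_eq_mul_div]
          exact div_le_div_of_nonneg_right (two_mul_sqrt_one_sub_sq_le hlam) hC.le
  refine ⟨hlam, lt_of_lt_of_le ?_ hbound, hbound⟩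
  have := khn_pos hk
  have := mfun_pos k3 hk
  positivity
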